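/- If there exists a [δ]^{<θ}-normal ideal on P_κ(λ), then the smallest [δ]^{<θ}-normal ideal on P_κ(λ) is ∇^{[δ]^{<θ̄·3}} I_{κ,λ} (where θ̄·3 denotes the cardinal product). -/

import Mathlib

/-!
Write `σ = θ̄·3`. A set `B ⊆ P_κ(λ)` lies in `N = ∇^{[δ]^{<σ}} I_{κ,λ}` exactly when it
misses the closure points of some witness `w : P_σ(δ) → P_κ(λ)`, i.e. the `a` with `w c ⊆ a`
for every `c ∈ P_{|a∩σ|}(a∩δ)`; hence `N` is an ideal. For `[δ]^{<θ}`-normality, the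
witnesses `w_e` of the pieces of a diagonal union are amalgamated into one: a closure point
`a` must absorb `w_e c` for all small `e, c ⊆ a ∩ δ`, so each pair `(e, c)` is coded by one
small subset of `a ∩ δ`. For uncountable `σ` the code is `G₀[e] ∪ G₁[c]`, with `G₀, G₁`
injections of `δ` into itself with disjoint ranges; for `σ ≤ ℵ₀` finite sets are named by
single ordinals and the code is a pair of names, small because `|a ∩ σ| ≥ 3`; for finite `δ`
a constant witness works. If `θ = κ = ν⁺`, then `σ = ν`, and a closure point `a ⊇ ν` has
`|a ∩ θ| ≤ |a| ≤ ν = |a ∩ σ|`, so `θ`-small sets are `σ`-small.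
Minimality: a `[δ]^{<θ}`-normal ideal is `[δ]^{<σ}`-normal for `σ ≤ θ`, and for finite
`σ > θ` by induction, splitting a set of size `k` into one of size `< k` and a point.
-/

open Cardinal Set

namespace PklNormal

/-- `P_κ(l)`: the collection of subsets of (the set of ordinals below) `l`
of cardinality `< κ`. -/
def PSet (κ : Cardinal.{0}) (l : Ordinal.{0}) : Set (Set Ordinal.{0}) :=
  {a | a ⊆ Set.Iio l ∧ #↥a < Cardinal.lift.{1} κ}

/-- `e ∈ P_{|a ∩ σ|}(a ∩ γ)`. -/
def inP (σ : Cardinal.{0}) (γ : Ordinal.{0}) (a e : Set Ordinal.{0}) : Prop :=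
  e ⊆ a ∩ Set.Iio γ ∧ #↥e < #↥(a ∩ Set.Iio σ.ord)

/-- The collection `I_{κ,l}` of non-cofinal subsets of `P_κ(l)`. -/
def Ikl (κ : Cardinal.{0}) (l : Ordinal.{0}) : Set (Set (Set Ordinal.{0})) :=
  {B | B ⊆ PSet κ l ∧ ∃ a ∈ PSet κ l, ∀ b ∈ B, ¬ a ⊆ b}

/-- An ideal on `P_κ(l)`. -/
structure IsIdeal (κ : Cardinal.{0}) (l : Ordinal.{0})
    (K : Set (Set (Set Ordinal.{0}))) : Prop where
  mem_subset : ∀ B ∈ K, B ⊆ PSet κ l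
  subset_mem : ∀ B ∈ K, ∀ C ⊆ B, C ∈ K
  sUnion_mem : ∀ Y ⊆ K, Y.Nonempty → #↥Y < Cardinal.lift.{1} κ → ⋃₀ Y ∈ K
  nonCofinal_subset : Ikl κ l ⊆ K
  univ_not_mem : PSet κ l ∉ K

/-- `K⁺`: the subsets of `P_κ(l)` not in `K`. -/
def plus (κ : Cardinal.{0}) (l : Ordinal.{0}) (K : Set (Set (Set Ordinal.{0}))) :
    Set (Set (Set Ordinal.{0})) :=
  {B | B ⊆ PSet κ l ∧ B ∉ K}

/-- `K*`: the subsets of `P_κ(l)` whose complement is in `K`. -/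
def star (κ : Cardinal.{0}) (l : Ordinal.{0}) (K : Set (Set (Set Ordinal.{0}))) :
    Set (Set (Set Ordinal.{0})) :=
  {B | B ⊆ PSet κ l ∧ PSet κ l \ B ∈ K}

/-- `K|A`. -/
def restrict (κ : Cardinal.{0}) (l : Ordinal.{0}) (K : Set (Set (Set Ordinal.{0})))
    (A : Set (Set Ordinal.{0})) : Set (Set (Set Ordinal.{0})) :=
  {B | B ⊆ PSet κ l ∧ B ∩ A ∈ K}

/-- `∇^{[γ]^{<σ}} J`. -/
def nabla (κ : Cardinal.{0}) (l : Ordinal.{0}) (σ : Cardinal.{0}) (γ : Ordinal.{0})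
    (J : Set (Set (Set Ordinal.{0}))) : Set (Set (Set Ordinal.{0})) :=
  {B | ∃ F : Set Ordinal.{0} → Set (Set Ordinal.{0}),
    (∀ e ∈ PSet σ γ, F e ∈ J) ∧
    B ⊆ {a | a ∈ PSet κ l ∧ a ∩ Set.Iio σ.ord = ∅} ∪
      ⋃ e ∈ PSet σ γ, {a | a ∈ F e ∧ inP σ γ a e}}

/-- `J` is `[γ]^{<σ}`-normal. -/
def IsNormal (κ : Cardinal.{0}) (l : Ordinal.{0}) (σ : Cardinal.{0}) (γ : Ordinal.{0})
    (J : Set (Set (Set Ordinal.{0}))) : Prop :=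
  J = nabla κ l σ γ J

def IsNormalIdeal (κ : Cardinal.{0}) (l : Ordinal.{0}) (σ : Cardinal.{0}) (γ : Ordinal.{0})
    (J : Set (Set (Set Ordinal.{0}))) : Prop :=
  IsIdeal κ l J ∧ IsNormal κ l σ γ J

/-- `N` is the smallest `[γ]^{<σ}`-normal ideal on `P_κ(l)`. -/
def IsLeastNormalIdeal (κ : Cardinal.{0}) (l : Ordinal.{0}) (σ : Cardinal.{0}) (γ : Ordinal.{0})
    (N : Set (Set (Set Ordinal.{0}))) : Prop :=
  IsNormalIdeal κ l σ γ N ∧ ∀ J, IsNormalIdeal κ l σ γ J → N ⊆ J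

/-- `∇^δ K`, the ordinal-indexed diagonal union. -/
def nablaOrd (κ : Cardinal.{0}) (l : Ordinal.{0}) (δ : Ordinal.{0})
    (K : Set (Set (Set Ordinal.{0}))) : Set (Set (Set Ordinal.{0})) :=
  {B | ∃ F : Ordinal.{0} → Set (Set Ordinal.{0}),
    (∀ α < δ, F α ∈ K) ∧
    B ⊆ {a | a ∈ PSet κ l ∧ (0 : Ordinal) ∉ a} ∪
      ⋃ α ∈ Set.Iio δ, {a | a ∈ F α ∧ α ∈ a}}

/-- `J` is `δ`-normal. -/
def IsOrdNormal (κ : Cardinal.{0}) (l : Ordinal.{0}) (δ : Ordinal.{0})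
    (J : Set (Set (Set Ordinal.{0}))) : Prop :=
  J = nablaOrd κ l δ J

/-- `θ̄`: equals `θ` if `θ < κ`, or if `θ = κ` and `κ` is a limit cardinal;
equals `ν` if `θ = κ = ν⁺`. -/
noncomputable def thetaBar (κ θ : Cardinal.{0}) : Cardinal.{0} :=
  haveI := Classical.propDecidable (θ < κ ∨ Order.IsSuccLimit κ)
  if θ < κ ∨ Order.IsSuccLimit κ then θ else sSup {ν | Order.succ ν = κ}

/-- `cof(K)`: the least number of generators of `K`. -/
noncomputable def cofIdeal (K : Set (Set (Set Ordinal.{0}))) : Cardinal.{1} :=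
  sInf {c | ∃ S ⊆ K, #↥S = c ∧ ∀ B ∈ K, ∃ C ∈ S, B ⊆ C}

/-- The dominating number `𝔡^μ_{κ,l}`. -/
noncomputable def dNum (κ : Cardinal.{0}) (l : Ordinal.{0}) (μ : Cardinal.{1}) : Cardinal.{1} :=
  sInf {c | ∃ F : Set (μ.ord.ToType → Set Ordinal.{0}),
    #↥F = c ∧ (∀ f ∈ F, ∀ i, f i ∈ PSet κ l) ∧
    ∀ g : μ.ord.ToType → Set Ordinal.{0}, (∀ i, g i ∈ PSet κ l) →
      ∃ f ∈ F, ∀ i, g i ⊆ f i}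

/-- `u(ρ,μ)`: the least cardinality of a cofinal subset of `(P_ρ(μ), ⊆)`. -/
noncomputable def uNum (ρ μ : Cardinal.{0}) : Cardinal.{1} :=
  sInf {c | ∃ X ⊆ PSet ρ μ.ord, #↥X = c ∧ ∀ e ∈ PSet ρ μ.ord, ∃ x ∈ X, e ⊆ x}

/-- `cov(lam, ν, ν, 2)`: the least cardinality of an `X ⊆ P_ν(lam)` such that every
member of `P_ν(lam)` is contained in a member of `X`. -/
noncomputable def covNum (lam ν : Cardinal.{0}) : Cardinal.{1} :=
  sInf {c | ∃ X ⊆ PSet ν lam.ord, #↥X = c ∧ ∀ e ∈ PSet ν lam.ord, ∃ x ∈ X, e ⊆ x}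

/-- `C` is closed unbounded in `l`. -/
def IsClubIn (C : Set Ordinal.{0}) (l : Ordinal.{0}) : Prop :=
  C ⊆ Set.Iio l ∧ (∀ p < l, ∃ q ∈ C, p < q) ∧
    (∀ o < l, Order.IsSuccLimit o → (∀ p < o, ∃ q ∈ C, p < q ∧ q < o) → o ∈ C)

/-- `κ` is a Mahlo cardinal: the set of regular cardinals below `κ` is stationary in `κ`. -/
def IsMahlo (κ : Cardinal.{0}) : Prop :=
  ∀ C : Set Ordinal.{0}, IsClubIn C κ.ord →
    ∃ o ∈ C, ∃ ρ : Cardinal.{0}, ρ.IsRegular ∧ ρ.ord = o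

theorem exists_union_eq_of_mk_lt {α : Type*} {e : Set α} {k : ℕ} (hk : 0 < k)
    (he : #↥e < (k + 1 : ℕ)) :
    ∃ e' ε : Set α, e' ∪ ε = e ∧ e' ⊆ e ∧ ε ⊆ e ∧ #↥e' < k ∧ #↥ε < 2 := by
  classical
  obtain ⟨E, rfl⟩ : ∃ E : Finset α, (E : Set α) = e :=
    (lt_aleph0_iff_set_finite.1 (he.trans natCast_lt_aleph0)).exists_finset_coe
  simp only [Finset.coe_sort_coe, mk_coe_finset, Nat.cast_lt] at he
  rcases lt_or_ge E.card k with hlt | hge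
  · exact ⟨E, ∅, union_empty _, subset_rfl, empty_subset _, by simpa using hlt, by simp⟩
  · obtain ⟨x, hx⟩ : E.Nonempty := Finset.card_pos.1 (by omega)
    refine ⟨↑(E.erase x), {x}, ?_, by simp, by simpa using hx, ?_, by simp⟩
    · rw [Finset.coe_erase, sdiff_union_self, union_eq_left.2 (by simpa using hx)]
    · simp only [Finset.coe_sort_coe, mk_coe_finset, Finset.card_erase_of_mem hx, Nat.cast_lt]
      omega

theorem finite_Iio_iff_lt_omega0 {δ : Ordinal.{0}} : (Iio δ).Finite ↔ δ < Ordinal.omega0 := by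
  rw [← lt_aleph0_iff_set_finite, mk_Iio_ordinal, lift_lt_aleph0, Ordinal.card_lt_aleph0]

theorem mk_setOf_finite_subset_le {α : Type*} {s : Set α} (hs : s.Infinite) :
    #{t : Set α | t ⊆ s ∧ t.Finite} ≤ #s := by
  have : Infinite s := hs.to_subtype
  calc #{t : Set α | t ⊆ s ∧ t.Finite}
      ≤ #(range fun F : Finset s => ((↑) '' (F : Set s) : Set α)) := by
        refine mk_le_mk_of_subset fun t ⟨hts, ht⟩ =>
          ⟨(ht.preimage Subtype.val_injective.injOn).toFinset, ?_⟩
        simpa using hts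
    _ ≤ #(Finset s) := mk_range_le
    _ = #s := mk_finset_of_infinite s

theorem mk_Iio_omega0 : #↥(Iio Ordinal.omega0.{0}) = ℵ₀ := by
  rw [mk_Iio_ordinal, Ordinal.card_omega0, lift_aleph0]

theorem mk_univ_prod {β : Type*} (T : Set β) :
    #↥((Set.univ : Set Bool) ×ˢ T) = 2 * #↥T := by
  rw [mk_congr (Equiv.Set.prod _ _), mk_prod, mk_univ]
  simp

/-- Two injective tagging maps `T → Iio δ` with disjoint ranges, as one map on `Bool × T`. -/
theorem exists_tagging {β : Type 1} {T : Set β} {δ : Ordinal.{0}} (hδ : Ordinal.omega0 ≤ δ)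
    (hT : #↥T ≤ #↥(Iio δ)) :
    ∃ f : Bool × β → Ordinal.{0},
      MapsTo f (Set.univ ×ˢ T) (Iio δ) ∧ InjOn f (Set.univ ×ˢ T) := by
  classical
  have hδ' : ℵ₀ ≤ #↥(Iio δ) := by
    rw [mk_Iio_ordinal]
    exact aleph0_le_lift.2 (Ordinal.aleph0_le_card.2 hδ)
  have hS : #↥((Set.univ : Set Bool) ×ˢ T) ≤ #↥(Iio δ) := by
    rw [mk_univ_prod]
    calc 2 * #↥T ≤ 2 * #↥(Iio δ) := by gcongr
      _ = #↥(Iio δ) := mul_eq_right hδ' ((natCast_lt_aleph0 (n := 2)).le.trans hδ') two_ne_zero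
  obtain ⟨g⟩ := hS
  refine ⟨fun x => if hx : x ∈ Set.univ ×ˢ T then g ⟨x, hx⟩ else 0,
    fun x hx => by simpa only [dif_pos hx] using (g ⟨x, hx⟩).2, fun x hx y hy hxy => ?_⟩
  have hg : g ⟨x, hx⟩ = g ⟨y, hy⟩ :=
    Subtype.ext (by simpa only [dif_pos hx, dif_pos hy] using hxy)
  exact congrArg Subtype.val (g.injective hg)

section PSet

variable {κ : Cardinal.{0}} {l : Ordinal.{0}}

theorem empty_mem_PSet (hκ : 0 < κ) : (∅ : Set Ordinal.{0}) ∈ PSet κ l :=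
  ⟨empty_subset _, by simpa using hκ⟩

theorem mk_lt_lift_of_finite (hκ : κ.IsRegular) {α : Type 1} {s : Set α} (hs : s.Finite) :
    #↥s < Cardinal.lift.{1} κ :=
  hs.lt_aleph0.trans_le hκ.lift.aleph0_le

theorem mem_PSet_of_finite (hκ : κ.IsRegular) {a : Set Ordinal.{0}} (hal : a ⊆ Iio l)
    (ha : a.Finite) : a ∈ PSet κ l :=
  ⟨hal, mk_lt_lift_of_finite hκ ha⟩

theorem union_mem_PSet (hκ : κ.IsRegular) {a b : Set Ordinal.{0}}
    (ha : a ∈ PSet κ l) (hb : b ∈ PSet κ l) : a ∪ b ∈ PSet κ l :=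
  ⟨union_subset ha.1 hb.1,
    (mk_union_le a b).trans_lt (add_lt_of_lt hκ.lift.aleph0_le ha.2 hb.2)⟩

theorem biUnion_mem_PSet (hκ : κ.IsRegular) {ι : Type 1} {s : Set ι}
    (hs : #↥s < Cardinal.lift.{1} κ) {f : ι → Set Ordinal.{0}}
    (hf : ∀ i ∈ s, f i ∈ PSet κ l) : (⋃ i ∈ s, f i) ∈ PSet κ l :=
  ⟨iUnion₂_subset fun i hi => (hf i hi).1,
    (card_biUnion_lt_iff_forall_of_isRegular hκ.lift hs).2 fun i hi => (hf i hi).2⟩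

theorem Iio_natCast_mem_PSet (hκ : κ.IsRegular) (hl : Ordinal.omega0 ≤ l) (k : ℕ) :
    Iio (k : Ordinal.{0}) ∈ PSet κ l :=
  ⟨Iio_subset_Iio ((Ordinal.natCast_lt_omega0 k).le.trans hl), by simpa using hκ.nat_lt k⟩

theorem image_univ_prod_mem_PSet (hκ : κ.IsRegular) {σ : Cardinal.{0}} {δ : Ordinal.{0}}
    (hσκ : σ ≤ κ) (hδl : δ ≤ l) {f : Bool × Ordinal.{0} → Ordinal.{0}}
    (hf : MapsTo f (Set.univ ×ˢ Iio δ) (Iio δ)) {c : Set Ordinal.{0}} (hc : c ∈ PSet σ δ) :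
    f '' (Set.univ ×ˢ c) ∈ PSet κ l := by
  refine ⟨?_, mk_image_le.trans_lt ?_⟩
  · rintro _ ⟨x, hx, rfl⟩
    exact Iio_subset_Iio hδl (hf ⟨trivial, hc.1 hx.2⟩)
  · rw [mk_univ_prod]
    exact mul_lt_of_lt hκ.lift.aleph0_le (by simpa using hκ.nat_lt 2)
      (hc.2.trans_le (lift_le.2 hσκ))

end PSet

theorem inP.mem_PSet {σ : Cardinal.{0}} {δ : Ordinal.{0}} {a e : Set Ordinal.{0}}
    (h : inP σ δ a e) : e ∈ PSet σ δ :=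
  ⟨fun _ hx => (h.1 hx).2, h.2.trans_le <| by
    simpa using mk_le_mk_of_subset (inter_subset_right (s := a) (t := Iio σ.ord))⟩

theorem inP_empty {σ : Cardinal.{0}} {δ : Ordinal.{0}} {a : Set Ordinal.{0}}
    (ha : (a ∩ Iio σ.ord).Nonempty) : inP σ δ a ∅ :=
  ⟨empty_subset _, by simpa [pos_iff_ne_zero, mk_ne_zero_iff] using ha.to_subtype⟩

theorem mk_inter_Iio_natCast {k : ℕ} {a : Set Ordinal.{0}} (h : Iio (k : Ordinal) ⊆ a) :
    #↥(a ∩ Iio ((k : Cardinal.{0})).ord) = k := by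
  rw [ord_natCast, inter_eq_self_of_subset_right h]
  simp

section Nabla

variable {κ σ : Cardinal.{0}} {l δ : Ordinal.{0}}

theorem nabla_subset_PSet {J : Set (Set (Set Ordinal.{0}))} (hJ : ∀ B ∈ J, B ⊆ PSet κ l)
    {B : Set (Set Ordinal.{0})} (hB : B ∈ nabla κ l σ δ J) : B ⊆ PSet κ l := by
  obtain ⟨F, hF, hcov⟩ := hB
  intro a ha
  rcases hcov ha with h | h
  · exact h.1
  · obtain ⟨e, he, haF, -⟩ := mem_iUnion₂.1 h
    exact hJ (F e) (hF e he) haF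

theorem subset_nabla {J : Set (Set (Set Ordinal.{0}))} (hJ : ∀ B ∈ J, B ⊆ PSet κ l)
    (hσ : 0 < σ) : J ⊆ nabla κ l σ δ J := by
  intro B hB
  refine ⟨fun _ => B, fun _ _ => hB, fun a ha => ?_⟩
  by_cases hem : a ∩ Iio σ.ord = ∅
  · exact Or.inl ⟨hJ B hB ha, hem⟩
  · exact Or.inr <| mem_iUnion₂.2
      ⟨∅, empty_mem_PSet hσ, ha, inP_empty (nonempty_iff_ne_empty.2 hem)⟩

theorem nabla_mono {J₁ J₂ : Set (Set (Set Ordinal.{0}))} (h : J₁ ⊆ J₂) :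
    nabla κ l σ δ J₁ ⊆ nabla κ l σ δ J₂ := by
  rintro B ⟨F, hF, hcov⟩
  exact ⟨F, fun e he => h (hF e he), hcov⟩

def closurePoints (κ : Cardinal.{0}) (l : Ordinal.{0}) (σ : Cardinal.{0}) (δ : Ordinal.{0})
    (w : Set Ordinal.{0} → Set Ordinal.{0}) : Set (Set Ordinal.{0}) :=
  {a | a ∈ PSet κ l ∧ (a ∩ Iio σ.ord).Nonempty ∧ ∀ c, inP σ δ a c → w c ⊆ a}

theorem closurePoints_anti {w₁ w₂ : Set Ordinal.{0} → Set Ordinal.{0}}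
    (h : ∀ c, w₁ c ⊆ w₂ c) :
    closurePoints κ l σ δ w₂ ⊆ closurePoints κ l σ δ w₁ :=
  fun _ ⟨haP, hane, hcl⟩ => ⟨haP, hane, fun c hc => (h c).trans (hcl c hc)⟩

theorem apply_empty_subset_of_mem_closurePoints {w : Set Ordinal.{0} → Set Ordinal.{0}}
    {a : Set Ordinal.{0}} (ha : a ∈ closurePoints κ l σ δ w) : w ∅ ⊆ a :=
  ha.2.2 ∅ (inP_empty ha.2.1)

theorem mem_nabla_Ikl_of_disjoint {B : Set (Set Ordinal.{0})} (hB : B ⊆ PSet κ l)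
    {w : Set Ordinal.{0} → Set Ordinal.{0}} (hw : ∀ c ∈ PSet σ δ, w c ∈ PSet κ l)
    (hdisj : Disjoint B (closurePoints κ l σ δ w)) : B ∈ nabla κ l σ δ (Ikl κ l) := by
  refine ⟨fun c => {b | b ∈ PSet κ l ∧ ¬w c ⊆ b},
    fun c hc => ⟨fun b hb => hb.1, w c, hw c hc, fun b hb => hb.2⟩, fun a haB => ?_⟩
  by_cases hem : a ∩ Iio σ.ord = ∅
  · exact Or.inl ⟨hB haB, hem⟩
  have hna : a ∉ closurePoints κ l σ δ w := disjoint_left.1 hdisj haB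
  simp only [closurePoints, mem_ofPred_eq, hB haB, nonempty_iff_ne_empty.2 hem, true_and,
    not_forall] at hna
  obtain ⟨c, hc, hwc⟩ := hna
  exact Or.inr <| mem_iUnion₂.2 ⟨c, hc.mem_PSet, ⟨hB haB, hwc⟩, hc⟩

theorem exists_disjoint_closurePoints (hκ : 0 < κ) {B : Set (Set Ordinal.{0})}
    (hB : B ∈ nabla κ l σ δ (Ikl κ l)) :
    ∃ w : Set Ordinal.{0} → Set Ordinal.{0},
      (∀ c, w c ∈ PSet κ l) ∧ Disjoint B (closurePoints κ l σ δ w) := by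
  obtain ⟨F, hF, hcov⟩ := hB
  have hwit : ∀ c, ∃ v ∈ PSet κ l, c ∈ PSet σ δ → ∀ b ∈ F c, ¬v ⊆ b := by
    intro c
    by_cases hc : c ∈ PSet σ δ
    · obtain ⟨v, hv, hvF⟩ := (hF c hc).2
      exact ⟨v, hv, fun _ => hvF⟩
    · exact ⟨∅, empty_mem_PSet hκ, fun h => absurd h hc⟩
  choose w hwP hwF using hwit
  refine ⟨w, hwP, disjoint_left.2 fun a haB ⟨_, hane, hcl⟩ => ?_⟩
  rcases hcov haB with h | h
  · exact hane.ne_empty h.2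
  · obtain ⟨e, he, haF, hae⟩ := mem_iUnion₂.1 h
    exact hwF e he a haF (hcl e hae)

theorem exists_disjoint_closurePoints_family (hκ : 0 < κ) {ι : Type*} (s : Set ι)
    (B : ι → Set (Set Ordinal.{0})) (hB : ∀ i ∈ s, B i ∈ nabla κ l σ δ (Ikl κ l)) :
    ∃ w : ι → Set Ordinal.{0} → Set Ordinal.{0},
      (∀ i c, w i c ∈ PSet κ l) ∧
        ∀ i ∈ s, Disjoint (B i) (closurePoints κ l σ δ (w i)) := by
  have hwit : ∀ i, ∃ w : Set Ordinal.{0} → Set Ordinal.{0},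
      (∀ c, w c ∈ PSet κ l) ∧ (i ∈ s → Disjoint (B i) (closurePoints κ l σ δ w)) := by
    intro i
    by_cases hi : i ∈ s
    · obtain ⟨w, hw, hdisj⟩ := exists_disjoint_closurePoints hκ (hB i hi)
      exact ⟨w, hw, fun _ => hdisj⟩
    · exact ⟨fun _ => ∅, fun _ => empty_mem_PSet hκ, fun h => absurd h hi⟩
  choose w hwP hwdisj using hwit
  exact ⟨w, hwP, hwdisj⟩

theorem sUnion_mem_nabla_Ikl (hκ : κ.IsRegular) {Y : Set (Set (Set Ordinal.{0}))}
    (hY : Y ⊆ nabla κ l σ δ (Ikl κ l)) (hYκ : #↥Y < Cardinal.lift.{1} κ) :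
    ⋃₀ Y ∈ nabla κ l σ δ (Ikl κ l) := by
  obtain ⟨w, hwP, hwdisj⟩ := exists_disjoint_closurePoints_family hκ.pos Y id hY
  refine mem_nabla_Ikl_of_disjoint (w := fun c => ⋃ B ∈ Y, w B c)
    (sUnion_subset fun B hB => nabla_subset_PSet (fun _ h => h.1) (hY hB))
    (fun c _ => biUnion_mem_PSet hκ hYκ fun B _ => hwP B c) ?_
  refine disjoint_sUnion_left.2 fun B hB => (hwdisj B hB).mono_right ?_
  exact closurePoints_anti fun c => subset_biUnion_of_mem (u := fun B => w B c) hB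

theorem isIdeal_nabla_Ikl (hκ : κ.IsRegular) (hσ : 0 < σ)
    (hP : PSet κ l ∉ nabla κ l σ δ (Ikl κ l)) :
    IsIdeal κ l (nabla κ l σ δ (Ikl κ l)) where
  mem_subset _ hB := nabla_subset_PSet (fun _ h => h.1) hB
  subset_mem _ := fun ⟨F, hF, hcov⟩ _ hCB => ⟨F, hF, hCB.trans hcov⟩
  sUnion_mem _ hY _ hYκ := sUnion_mem_nabla_Ikl hκ hY hYκ
  nonCofinal_subset := subset_nabla (fun _ h => h.1) hσ
  univ_not_mem := hP

end Nabla

section Minimality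

variable {κ σ θ : Cardinal.{0}} {l δ : Ordinal.{0}} {J : Set (Set (Set Ordinal.{0}))}

theorem IsIdeal.union_mem (hJ : IsIdeal κ l J) (hκ : κ.IsRegular) {A B : Set (Set Ordinal.{0})}
    (hA : A ∈ J) (hB : B ∈ J) : A ∪ B ∈ J := by
  rw [← sUnion_pair]
  refine hJ.sUnion_mem _ (pair_subset hA hB) (insert_nonempty _ _) (mk_lt_lift_of_finite hκ ?_)
  exact (finite_singleton B).insert A

theorem IsIdeal.empty_mem (hJ : IsIdeal κ l J) (hκ : 0 < κ) : ∅ ∈ J :=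
  hJ.nonCofinal_subset ⟨empty_subset _, ∅, empty_mem_PSet hκ, fun _ hb => hb.elim⟩

theorem IsIdeal.setOf_not_subset_mem (hJ : IsIdeal κ l J) {x : Set Ordinal.{0}}
    (hx : x ∈ PSet κ l) : {a | a ∈ PSet κ l ∧ ¬x ⊆ a} ∈ J :=
  hJ.nonCofinal_subset ⟨fun _ ha => ha.1, x, hx, fun _ hb => hb.2⟩

theorem IsIdeal.setOf_inter_Iio_eq_empty_mem (hJ : IsIdeal κ l J) (hκ : κ.IsRegular)
    (hl : 0 < l) (hσ : 0 < σ) : {a | a ∈ PSet κ l ∧ a ∩ Iio σ.ord = ∅} ∈ J := by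
  refine hJ.subset_mem _ (hJ.setOf_not_subset_mem
    (mem_PSet_of_finite hκ (singleton_subset_iff.2 hl) (finite_singleton 0))) _ ?_
  rintro a ⟨haP, ha⟩
  refine ⟨haP, fun h0 => ?_⟩
  have h0σ : (0 : Ordinal) ∈ a ∩ Iio σ.ord := ⟨h0 rfl, by simpa using hσ⟩
  simp [ha] at h0σ

theorem nabla_subset_nabla_of_le (hJ : IsIdeal κ l J) (hκ : κ.IsRegular) (hl : 0 < l)
    {σ₁ σ₂ : Cardinal.{0}} (h0 : 0 < σ₁) (h12 : σ₁ ≤ σ₂) :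
    nabla κ l σ₁ δ J ⊆ nabla κ l σ₂ δ J := by
  classical
  set D := {a | a ∈ PSet κ l ∧ a ∩ Iio σ₁.ord = ∅}
  rintro B ⟨F, hF, hcov⟩
  refine ⟨fun e => (if e ∈ PSet σ₁ δ then F e else ∅) ∪ D, fun e _ => ?_,
    fun a ha => ?_⟩
  · refine hJ.union_mem hκ ?_ (hJ.setOf_inter_Iio_eq_empty_mem hκ hl h0)
    split_ifs with he
    exacts [hF e he, hJ.empty_mem hκ.pos]
  rcases hcov ha with h | h
  · by_cases hem : a ∩ Iio σ₂.ord = ∅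
    · exact Or.inl ⟨h.1, hem⟩
    · exact Or.inr <| mem_iUnion₂.2 ⟨∅, empty_mem_PSet (h0.trans_le h12), Or.inr h,
        inP_empty (nonempty_iff_ne_empty.2 hem)⟩
  · obtain ⟨e, he, haF, hae⟩ := mem_iUnion₂.1 h
    refine Or.inr <| mem_iUnion₂.2
      ⟨e, ⟨he.1, he.2.trans_le (lift_le.2 h12)⟩, ?_, hae.1, ?_⟩
    · simpa [he] using Or.inl haF
    · exact hae.2.trans_le <| mk_le_mk_of_subset <|
        inter_subset_inter_right _ (Iio_subset_Iio (ord_le_ord.2 h12))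

theorem setOf_mem_shift_mem_nabla (hJ : IsIdeal κ l J) (hκ : 0 < κ) {σ' : Cardinal.{0}}
    {F : Set Ordinal.{0} → Set (Set Ordinal.{0})} (hF : ∀ e ∈ PSet σ' δ, F e ∈ J)
    (ε : Set Ordinal.{0}) :
    {a | ∃ e, inP σ δ a e ∧ e ∪ ε ∈ PSet σ' δ ∧ a ∈ F (e ∪ ε)} ∈
      nabla κ l σ δ J := by
  classical
  refine ⟨fun e => if e ∪ ε ∈ PSet σ' δ then F (e ∪ ε) else ∅, fun e _ => ?_, ?_⟩
  · dsimp only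
    split_ifs with he
    exacts [hF _ he, hJ.empty_mem hκ]
  · rintro a ⟨e, hae, heε, haF⟩
    exact Or.inr <| mem_iUnion₂.2 ⟨e, hae.mem_PSet, by simpa [heε] using haF, hae⟩

theorem nabla_natCast_succ_subset (hJ : IsIdeal κ l J) (hκ : κ.IsRegular)
    (hl : Ordinal.omega0 ≤ l) {n k : ℕ} (hn : 2 ≤ n) (hnk : n ≤ k)
    (hnJ : nabla κ l n δ J ⊆ J) (hkJ : nabla κ l k δ J ⊆ J) :
    nabla κ l (k + 1 : ℕ) δ J ⊆ J := by
  intro B hB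
  have hBP : B ⊆ PSet κ l := nabla_subset_PSet hJ.mem_subset hB
  obtain ⟨F, hF, hcov⟩ := hB
  set A := Iio ((k + 1 : ℕ) : Ordinal.{0})
  have hL : ∀ ε,
      {a | ∃ e, inP k δ a e ∧ e ∪ ε ∈ PSet (k + 1 : ℕ) δ ∧ a ∈ F (e ∪ ε)} ∈ J :=
    fun ε => hkJ (setOf_mem_shift_mem_nabla hJ hκ.pos hF ε)
  have hBA : B ∩ {a | A ⊆ a} ∈ J := by
    refine hnJ ⟨_, fun ε _ => hL ε, ?_⟩
    rintro a ⟨haB, hAa⟩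
    have hIio : ∀ m ≤ k + 1, #↥(a ∩ Iio ((m : Cardinal.{0})).ord) = m := fun m hm =>
      mk_inter_Iio_natCast ((Iio_subset_Iio (by exact_mod_cast hm)).trans hAa)
    rcases hcov haB with h | h
    · have := hIio (k + 1) le_rfl
      rw [h.2, mk_eq_zero] at this
      exact absurd this.symm (Nat.cast_ne_zero.2 k.succ_ne_zero)
    obtain ⟨e, he, haF, hae⟩ := mem_iUnion₂.1 h
    obtain ⟨e', ε, rfl, he'e, hεe, he', hε⟩ :=
      exists_union_eq_of_mk_lt (by omega) (hIio (k + 1) le_rfl ▸ hae.2)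
    have haε : inP n δ a ε := ⟨hεe.trans hae.1, by
      rw [hIio n (by omega)]
      exact hε.trans_le (by exact_mod_cast hn)⟩
    exact Or.inr <| mem_iUnion₂.2 ⟨ε, haε.mem_PSet,
      ⟨e', ⟨he'e.trans hae.1, by rwa [hIio k (by omega)]⟩, he, haF⟩, haε⟩
  refine hJ.subset_mem _ (hJ.union_mem hκ (hJ.setOf_not_subset_mem
    (Iio_natCast_mem_PSet hκ hl (k + 1))) hBA) B fun a ha => ?_
  by_cases h : A ⊆ a
  exacts [Or.inr ⟨ha, h⟩, Or.inl ⟨hBP ha, h⟩]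

theorem nabla_natCast_subset (hJ : IsIdeal κ l J) (hκ : κ.IsRegular)
    (hl : Ordinal.omega0 ≤ l) {n : ℕ} (hn : 2 ≤ n) (hnJ : nabla κ l n δ J ⊆ J) {k : ℕ}
    (hnk : n ≤ k) : nabla κ l k δ J ⊆ J := by
  induction k, hnk using Nat.le_induction with
  | base => exact hnJ
  | succ k hnk ih => exact nabla_natCast_succ_subset hJ hκ hl hn hnk hnJ ih

theorem nabla_subset_of_isNormal (hJ : IsNormalIdeal κ l θ δ J) (hκ : κ.IsRegular)
    (hl : Ordinal.omega0 ≤ l) (hθ : 2 ≤ θ) (hσ : 0 < σ)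
    (hσθ : σ ≤ θ ∨ σ < ℵ₀) :
    nabla κ l σ δ J ⊆ J := by
  have hl0 : 0 < l := Ordinal.omega0_pos.trans_le hl
  have hθJ : nabla κ l θ δ J ⊆ J := hJ.2.symm.subset
  rcases le_or_gt σ θ with hσθ' | hθσ
  · exact (nabla_subset_nabla_of_le hJ.1 hκ hl0 hσ hσθ').trans hθJ
  have hσω := hσθ.resolve_left hθσ.not_ge
  obtain ⟨k, rfl⟩ := lt_aleph0.1 hσω
  obtain ⟨n, rfl⟩ := lt_aleph0.1 (hθσ.trans hσω)
  exact nabla_natCast_subset hJ.1 hκ hl (by exact_mod_cast hθ) hθJ (by exact_mod_cast hθσ.le)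

end Minimality

section Amalgamation

variable {κ σ : Cardinal.{0}} {l δ : Ordinal.{0}}
  {W : Set Ordinal.{0} → Set Ordinal.{0} → Set Ordinal.{0}}

def Amalgamable (κ σ : Cardinal.{0}) (l δ : Ordinal.{0})
    (W : Set Ordinal.{0} → Set Ordinal.{0} → Set Ordinal.{0}) : Prop :=
  ∃ w : Set Ordinal.{0} → Set Ordinal.{0}, (∀ c ∈ PSet σ δ, w c ∈ PSet κ l) ∧
    ∀ a ∈ closurePoints κ l σ δ w, ∀ e c, inP σ δ a e → inP σ δ a c → W e c ⊆ a

theorem amalgamable_of_lt_omega0 (hκ : κ.IsRegular) (hW : ∀ e c, W e c ∈ PSet κ l)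
    (hδ : δ < Ordinal.omega0) : Amalgamable κ σ l δ W := by
  have hfin : {s : Set Ordinal.{0} | s ⊆ Iio δ}.Finite :=
    (finite_Iio_iff_lt_omega0.2 hδ).finite_subsets
  have hlt := mk_lt_lift_of_finite hκ hfin
  refine ⟨fun _ => ⋃ e ∈ {s | s ⊆ Iio δ}, ⋃ c ∈ {s | s ⊆ Iio δ}, W e c,
    fun _ _ => biUnion_mem_PSet hκ hlt fun e _ => biUnion_mem_PSet hκ hlt fun c _ => hW e c,
    fun a ha e c he hc => ?_⟩
  refine Subset.trans ?_ (apply_empty_subset_of_mem_closurePoints ha)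
  exact (subset_biUnion_of_mem (u := W e) hc.mem_PSet.1).trans
    (subset_biUnion_of_mem (u := fun e => ⋃ c ∈ {s | s ⊆ Iio δ}, W e c) he.mem_PSet.1)

/-- Amalgamation through a coding of pairs: `decode` recovers each pair of small subsets of a
closure point of `v` from a small code inside it. -/
theorem amalgamable_of_decode (hκ : κ.IsRegular) (hW : ∀ e c, W e c ∈ PSet κ l)
    {v : Set Ordinal.{0} → Set Ordinal.{0}} (hv : ∀ c ∈ PSet σ δ, v c ∈ PSet κ l)
    (decode : Set Ordinal.{0} → Set Ordinal.{0} × Set Ordinal.{0})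
    (hdecode : ∀ a ∈ closurePoints κ l σ δ v, ∀ e c, inP σ δ a e → inP σ δ a c →
      ∃ d, inP σ δ a d ∧ decode d = (e, c)) :
    Amalgamable κ σ l δ W := by
  refine ⟨fun d => v d ∪ W (decode d).1 (decode d).2,
    fun d hd => union_mem_PSet hκ (hv d hd) (hW _ _), fun a ha e c he hc => ?_⟩
  obtain ⟨d, hd, hde⟩ :=
    hdecode a (closurePoints_anti (fun _ => subset_union_left) ha) e c he hc
  have := (union_subset_iff.1 (ha.2.2 d hd)).2
  rwa [hde] at this

theorem amalgamable_of_aleph0_lt (hκ : κ.IsRegular) (hW : ∀ e c, W e c ∈ PSet κ l)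
    (hδω : Ordinal.omega0 ≤ δ) (hδl : δ ≤ l) (hσ : ℵ₀ < σ) (hσκ : σ ≤ κ) :
    Amalgamable κ σ l δ W := by
  obtain ⟨f, hfδ, hfinj⟩ := exists_tagging hδω (T := Iio δ) le_rfl
  set S := (Set.univ : Set Bool) ×ˢ Iio δ
  have hω : Iio Ordinal.omega0 ∈ PSet κ l := ⟨Iio_subset_Iio (hδω.trans hδl),
    mk_Iio_omega0 ▸ aleph0_lt_lift.2 (hσ.trans_le hσκ)⟩
  refine amalgamable_of_decode hκ hW (v := fun c => Iio Ordinal.omega0 ∪ f '' (Set.univ ×ˢ c))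
    (fun c hc => union_mem_PSet hκ hω (image_univ_prod_mem_PSet hκ hσκ hδl hfδ hc))
    (fun d => (Prod.mk false ⁻¹' (f ⁻¹' d ∩ S), Prod.mk true ⁻¹' (f ⁻¹' d ∩ S))) ?_
  intro a ha e c he hc
  have hωa : Iio Ordinal.omega0 ⊆ a ∩ Iio σ.ord := fun x hx =>
    ⟨apply_empty_subset_of_mem_closurePoints ha (Or.inl hx),
      hx.trans_le (omega0_le_ord.2 hσ.le)⟩
  have hinf : ℵ₀ ≤ #↥(a ∩ Iio σ.ord) := mk_Iio_omega0 ▸ mk_le_mk_of_subset hωa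
  have htag : ∀ α ∈ a ∩ Iio δ, ∀ b, f (b, α) ∈ a := fun α hα b => by
    refine ha.2.2 {α} ⟨singleton_subset_iff.2 hα, ?_⟩
      (Or.inr ⟨(b, α), ⟨trivial, rfl⟩, rfl⟩)
    rw [mk_singleton]
    exact one_lt_aleph0.trans_le hinf
  have hsmall : ∀ (b : Bool) (s : Set Ordinal.{0}), inP σ δ a s →
      #↥({b} ×ˢ s) < #↥(a ∩ Iio σ.ord) := fun b s hs => by
    simpa [singleton_prod] using mk_image_le.trans_lt hs.2
  set T := {false} ×ˢ e ∪ {true} ×ˢ c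
  have hTS : T ⊆ S := union_subset (prod_mono (subset_univ _) fun _ hx => (he.1 hx).2)
    (prod_mono (subset_univ _) fun _ hx => (hc.1 hx).2)
  refine ⟨f '' T, ⟨?_, mk_image_le.trans_lt ?_⟩, ?_⟩
  · rintro _ ⟨⟨b, α⟩, hx, rfl⟩
    have hα : α ∈ a ∩ Iio δ := by
      rcases hx with ⟨-, hα⟩ | ⟨-, hα⟩
      exacts [he.1 hα, hc.1 hα]
    exact ⟨htag α hα b, hfδ (hTS hx)⟩
  · exact (mk_union_le _ _).trans_lt
      (add_lt_of_lt hinf (hsmall false e he) (hsmall true c hc))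
  · rw [hfinj.preimage_image_inter hTS]
    ext <;> simp [T]

theorem amalgamable_of_le_aleph0 (hκ : κ.IsRegular) (hW : ∀ e c, W e c ∈ PSet κ l)
    (hδω : Ordinal.omega0 ≤ δ) (hδl : δ ≤ l) (h3σ : 3 ≤ σ) (hσ : σ ≤ ℵ₀) :
    Amalgamable κ σ l δ W := by
  set T := {s : Set Ordinal.{0} | s ⊆ Iio δ ∧ s.Finite}
  obtain ⟨f, hfδ, hfinj⟩ := exists_tagging hδω
    (mk_setOf_finite_subset_le (fun h => (finite_Iio_iff_lt_omega0.1 h).not_ge hδω))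
  set S := (Set.univ : Set Bool) ×ˢ T
  have hT : ∀ c ∈ PSet σ δ, c ∈ T := fun c hc =>
    ⟨hc.1, lt_aleph0_iff_set_finite.1 (hc.2.trans_le (by simpa using hσ))⟩
  have h3l : Iio ((3 : ℕ) : Ordinal.{0}) ⊆ Iio l :=
    Iio_subset_Iio (((Ordinal.natCast_lt_omega0 3).le.trans hδω).trans hδl)
  refine amalgamable_of_decode hκ hW
    (v := fun c => Iio ((3 : ℕ) : Ordinal.{0}) ∪ f '' (Set.univ ×ˢ {c})) ?_
    (fun d => (⋃₀ (Prod.mk false ⁻¹' (f ⁻¹' d ∩ S)),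
      ⋃₀ (Prod.mk true ⁻¹' (f ⁻¹' d ∩ S))))
    ?_
  · refine fun c hc => mem_PSet_of_finite hκ (union_subset h3l ?_)
      ((finite_Iio_iff_lt_omega0.2 (Ordinal.natCast_lt_omega0 3)).union
        ((finite_univ.prod (finite_singleton c)).image f))
    rintro _ ⟨⟨b, s⟩, ⟨-, rfl⟩, rfl⟩
    exact Iio_subset_Iio hδl (hfδ ⟨trivial, hT _ hc⟩)
  intro a ha e c he hc
  have h3a : Iio ((3 : ℕ) : Ordinal.{0}) ⊆ a := fun x hx =>
    apply_empty_subset_of_mem_closurePoints ha (Or.inl hx)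
  have h3σa : ((3 : ℕ) : Cardinal.{1}) ≤ #↥(a ∩ Iio σ.ord) := by
    rw [← mk_inter_Iio_natCast h3a]
    exact mk_le_mk_of_subset (inter_subset_inter_right _ (Iio_subset_Iio (ord_le_ord.2 h3σ)))
  have htag : ∀ s, inP σ δ a s → ∀ b, f (b, s) ∈ a ∩ Iio δ := fun s hs b =>
    ⟨ha.2.2 s hs (Or.inr ⟨(b, s), ⟨trivial, rfl⟩, rfl⟩),
      hfδ ⟨trivial, hT s hs.mem_PSet⟩⟩
  have hTS : {(false, e), (true, c)} ⊆ S :=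
    pair_subset ⟨trivial, hT e he.mem_PSet⟩ ⟨trivial, hT c hc.mem_PSet⟩
  refine ⟨f '' {(false, e), (true, c)}, ⟨?_, mk_image_le.trans_lt ?_⟩, ?_⟩
  · rintro _ ⟨x, rfl | rfl, rfl⟩
    exacts [htag e he false, htag c hc true]
  · calc #↥({(false, e), (true, c)} : Set (Bool × Set Ordinal.{0}))
        ≤ #↥({(true, c)} : Set (Bool × Set Ordinal.{0})) + 1 := mk_insert_le
      _ < (3 : ℕ) := by norm_num
      _ ≤ #↥(a ∩ Iio σ.ord) := h3σa
  · rw [hfinj.preimage_image_inter hTS]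
    ext x <;> simp

theorem amalgamable_of_three_le (hκ : κ.IsRegular) (hW : ∀ e c, W e c ∈ PSet κ l)
    (hδl : δ ≤ l) (h3σ : 3 ≤ σ) (hσκ : σ ≤ κ) : Amalgamable κ σ l δ W := by
  rcases lt_or_ge δ Ordinal.omega0 with hδ | hδ
  · exact amalgamable_of_lt_omega0 hκ hW hδ
  rcases le_or_gt σ ℵ₀ with hσ | hσ
  · exact amalgamable_of_le_aleph0 hκ hW hδ hδl h3σ hσ
  · exact amalgamable_of_aleph0_lt hκ hW hδ hδl hσ hσκ

end Amalgamation

section Normality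

variable {κ σ θ : Cardinal.{0}} {l δ : Ordinal.{0}}

theorem exists_forall_mk_inter_Iio_le (hκ : 0 < κ) (hσl : σ.ord ≤ l)
    (hθσ : θ ≤ σ ∨ κ = Order.succ σ) :
    ∃ P ∈ PSet κ l, ∀ a ∈ PSet κ l, P ⊆ a →
      #↥(a ∩ Iio θ.ord) ≤ #↥(a ∩ Iio σ.ord) := by
  rcases hθσ with hθσ | rfl
  · exact ⟨∅, empty_mem_PSet hκ, fun a _ _ => mk_le_mk_of_subset
      (inter_subset_inter_right _ (Iio_subset_Iio (ord_le_ord.2 hθσ)))⟩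
  refine ⟨Iio σ.ord, ⟨Iio_subset_Iio hσl, ?_⟩, fun a ha hσa => ?_⟩
  · simp
  rw [inter_eq_right.2 hσa, mk_Iio_ordinal, card_ord, ← Order.lt_succ_iff, ← lift_succ]
  exact (mk_le_mk_of_subset inter_subset_left).trans_lt ha.2

theorem nabla_nabla_Ikl_subset (hκ : κ.IsRegular) (hδl : δ ≤ l) (hσl : σ.ord ≤ l)
    (hθ : 0 < θ) (h3σ : 3 ≤ σ) (hσκ : σ ≤ κ)
    (hθσ : θ ≤ σ ∨ κ = Order.succ σ) :
    nabla κ l θ δ (nabla κ l σ δ (Ikl κ l)) ⊆ nabla κ l σ δ (Ikl κ l) := by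
  intro B hB
  have hBP : B ⊆ PSet κ l :=
    nabla_subset_PSet (fun _ hC => nabla_subset_PSet (fun _ h => h.1) hC) hB
  obtain ⟨F, hF, hcov⟩ := hB
  obtain ⟨W, hWP, hWdisj⟩ := exists_disjoint_closurePoints_family hκ.pos (PSet θ δ) F hF
  obtain ⟨w, hwP, hw⟩ := amalgamable_of_three_le hκ hWP hδl h3σ hσκ
  obtain ⟨P, hP, hPle⟩ := exists_forall_mk_inter_Iio_le hκ.pos hσl hθσ
  have hl : (0 : Ordinal.{0}) < l :=
    (ord_pos.2 ((show (0 : Cardinal.{0}) < 3 by norm_num).trans_le h3σ)).trans_le hσl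
  have h0P : {0} ∪ P ∈ PSet κ l :=
    union_mem_PSet hκ (mem_PSet_of_finite hκ (singleton_subset_iff.2 hl) (finite_singleton 0)) hP
  refine mem_nabla_Ikl_of_disjoint hBP (w := fun c => ({0} ∪ P) ∪ w c)
    (fun c hc => union_mem_PSet hκ h0P (hwP c hc)) (disjoint_left.2 fun a haB ha => ?_)
  have h0Pa : {0} ∪ P ⊆ a := subset_union_left.trans
    (apply_empty_subset_of_mem_closurePoints (w := fun c => ({0} ∪ P) ∪ w c) ha)
  have haw : a ∈ closurePoints κ l σ δ w := closurePoints_anti (fun _ => subset_union_right) ha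
  rcases hcov haB with h | h
  · have h0 : (0 : Ordinal.{0}) ∈ a ∩ Iio θ.ord := ⟨h0Pa (Or.inl rfl), by simpa using hθ⟩
    simp [h.2] at h0
  · obtain ⟨e, he, haF, hae⟩ := mem_iUnion₂.1 h
    have hae' : inP σ δ a e :=
      ⟨hae.1, hae.2.trans_le (hPle a (hBP haB) (subset_union_right.trans h0Pa))⟩
    exact disjoint_left.1 (hWdisj e he) haF ⟨ha.1, ha.2.1, fun c hc => hw a haw e c hae' hc⟩

end Normality

section ThetaBar

variable {κ θ : Cardinal.{0}}

theorem thetaBar_mul_three_cases (hκ : κ.IsRegular) (hθκ : θ ≤ κ) :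
    (∃ n : ℕ, θ = n ∧ thetaBar κ θ * 3 = (3 * n : ℕ)) ∨
    (ℵ₀ ≤ θ ∧ thetaBar κ θ * 3 = θ) ∨
    (θ = κ ∧ ℵ₀ ≤ thetaBar κ θ * 3 ∧ κ = Order.succ (thetaBar κ θ * 3)) := by
  by_cases hcond : θ < κ ∨ Order.IsSuccLimit κ
  · have ht : thetaBar κ θ = θ := if_pos hcond
    rw [ht]
    rcases lt_or_ge θ ℵ₀ with hθ | hθ
    · obtain ⟨n, rfl⟩ := lt_aleph0.1 hθ
      exact Or.inl ⟨n, rfl, by push_cast; ring⟩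
    · exact Or.inr <| Or.inl
        ⟨hθ, mul_eq_left hθ (ofNat_lt_aleph0.le.trans hθ) three_ne_zero⟩
  rw [not_or, not_lt] at hcond
  obtain ⟨hκθ, hlim⟩ := hcond
  obtain ⟨ν, -, hν⟩ := Order.not_isSuccPrelimit_iff_succ_eq.1 <|
    (Order.not_isSuccLimit_iff.1 hlim).resolve_left (not_isMin_of_lt hκ.pos)
  have hset : {ν' | Order.succ ν' = κ} = {ν} :=
    eq_singleton_iff_unique_mem.2
      ⟨hν, fun ν' hν' => Order.succ_injective (hν'.trans hν.symm)⟩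
  have ht : thetaBar κ θ = ν := by
    rw [thetaBar, if_neg (not_or.2 ⟨hκθ.not_gt, hlim⟩), hset, csSup_singleton]
  have hνω : ℵ₀ ≤ ν := by
    by_contra! hνω
    have hκω : κ = ℵ₀ := le_antisymm (hν ▸ Order.succ_le_of_lt hνω) hκ.aleph0_le
    exact hlim (hκω ▸ isSuccLimit_aleph0)
  rw [ht, mul_eq_left hνω (ofNat_lt_aleph0.le.trans hνω) three_ne_zero]
  exact Or.inr <| Or.inr ⟨le_antisymm hθκ hκθ, hνω, hν.symm⟩

theorem three_le_thetaBar_mul_three (hκ : κ.IsRegular) (hθ : 2 ≤ θ) (hθκ : θ ≤ κ) :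
    3 ≤ thetaBar κ θ * 3 := by
  rcases thetaBar_mul_three_cases hκ hθκ with ⟨n, rfl, h⟩ | ⟨hθω, h⟩ | ⟨-, hω, -⟩
  · have : 2 ≤ n := by exact_mod_cast hθ
    rw [h]
    exact_mod_cast (by omega : 3 ≤ 3 * n)
  · rw [h]
    exact ofNat_lt_aleph0.le.trans hθω
  · exact ofNat_lt_aleph0.le.trans hω

theorem thetaBar_mul_three_le (hκ : κ.IsRegular) (hθκ : θ ≤ κ) :
    thetaBar κ θ * 3 ≤ κ := by
  rcases thetaBar_mul_three_cases hκ hθκ with ⟨n, -, h⟩ | ⟨-, h⟩ | ⟨-, -, h⟩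
  · rw [h]
    exact (hκ.nat_lt _).le
  · rwa [h]
  · exact (Order.le_succ _).trans h.ge

theorem thetaBar_mul_three_le_or_lt_aleph0 (hκ : κ.IsRegular) (hθκ : θ ≤ κ) :
    thetaBar κ θ * 3 ≤ θ ∨ thetaBar κ θ * 3 < ℵ₀ := by
  rcases thetaBar_mul_three_cases hκ hθκ with ⟨n, -, h⟩ | ⟨-, h⟩ | ⟨rfl, -, -⟩
  · exact Or.inr (h ▸ natCast_lt_aleph0)
  · exact Or.inl h.le
  · exact Or.inl (thetaBar_mul_three_le hκ le_rfl)

theorem le_thetaBar_mul_three_or_eq_succ (hκ : κ.IsRegular) (hθκ : θ ≤ κ) :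
    θ ≤ thetaBar κ θ * 3 ∨ κ = Order.succ (thetaBar κ θ * 3) := by
  rcases thetaBar_mul_three_cases hκ hθκ with ⟨n, rfl, h⟩ | ⟨-, h⟩ | ⟨-, -, h⟩
  · exact Or.inl (h ▸ by exact_mod_cast Nat.le_mul_of_pos_left n three_pos)
  · exact Or.inl h.ge
  · exact Or.inr h

end ThetaBar

theorem stmt3_general (κ lam θ : Cardinal.{0}) (δ : Ordinal.{0})
    (hκ : κ.IsRegular) (hkl : κ ≤ lam) (hθ2 : 2 ≤ θ) (hθκ : θ ≤ κ)
    (hdl : δ ≤ lam.ord)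
    (hex : ∃ J, IsNormalIdeal κ lam.ord θ δ J) :
    IsLeastNormalIdeal κ lam.ord θ δ
      (nabla κ lam.ord (thetaBar κ θ * 3) δ (Ikl κ lam.ord)) := by
  have hθ : 0 < θ := two_pos.trans_le hθ2
  have h3σ := three_le_thetaBar_mul_three hκ hθ2 hθκ
  have hσ : 0 < thetaBar κ θ * 3 := three_pos.trans_le h3σ
  have hσκ := thetaBar_mul_three_le hκ hθκ
  have hl : Ordinal.omega0 ≤ lam.ord := omega0_le_ord.2 (hκ.aleph0_le.trans hkl)
  have hmin : ∀ J, IsNormalIdeal κ lam.ord θ δ J →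
      nabla κ lam.ord (thetaBar κ θ * 3) δ (Ikl κ lam.ord) ⊆ J := fun J hJ =>
    (nabla_mono hJ.1.nonCofinal_subset).trans <| nabla_subset_of_isNormal hJ hκ hl hθ2 hσ
      (thetaBar_mul_three_le_or_lt_aleph0 hκ hθκ)
  obtain ⟨J, hJ⟩ := hex
  refine ⟨⟨isIdeal_nabla_Ikl hκ hσ fun hP => hJ.1.univ_not_mem (hmin J hJ hP), ?_⟩, hmin⟩
  exact (subset_nabla (fun _ hB => nabla_subset_PSet (fun _ h => h.1) hB) hθ).antisymm
    (nabla_nabla_Ikl_subset hκ hdl (ord_le_ord.2 (hσκ.trans hkl)) hθ h3σ hσκ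
      (le_thetaBar_mul_three_or_eq_succ hκ hθκ))

/-- If there exists a `[δ]^{<θ}`-normal ideal on `P_κ(λ)`, then the smallest
`[δ]^{<θ}`-normal ideal on `P_κ(λ)` is `∇^{[δ]^{<θ̄·3}} I_{κ,λ}`. -/
theorem stmt3 (κ lam θ : Cardinal.{0}) (δ : Ordinal.{0})
    (hκ : κ.IsRegular) (hkl : κ ≤ lam) (hθ2 : 2 ≤ θ) (hθκ : θ ≤ κ)
    (hδ1 : 1 ≤ δ) (hdl : δ ≤ lam.ord)
    (hex : ∃ J, IsNormalIdeal κ lam.ord θ δ J) :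
    IsLeastNormalIdeal κ lam.ord θ δ
      (nabla κ lam.ord (thetaBar κ θ * 3) δ (Ikl κ lam.ord)) :=
  stmt3_general κ lam θ δ hκ hkl hθ2 hθκ hdl hex

end PklNormal
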